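/- arXiv:1512.00976 — 2 statements merged into one kernel-verified Lean document; each statement's English description precedes it below -/
import Mathlib

section
/- In a regular vine V = (T₁,…,T_{d−1}) on d elements, for every edge e = {a,b} of tree T_k (k ≥ 1), the conditioned sets i(e) = A_a \ D(e) and j(e) = A_b \ D(e) are singletons, and the conditioning set D(e) = A_a ∩ A_b has cardinality k−1; consequently the complete union A_e has cardinality k+1. -/
/-- Nodes of the trees of a regular vine on `d` elements: nodes of `T₁` are
`{1,…,d}` (here `Fin d`), and nodes of `T_{k+1}` are (unordered pairs forming)
edges of `T_k`. -/
@[reducible] def VineNode (d : ℕ) : ℕ → Type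
  | 0 => Fin d
  | k + 1 => Sym2 (VineNode d k)

/-- The simple graph on the vertex subset `S` whose edges are the unordered
pairs in `E`. -/
def graphOn {α : Type*} (E : Set (Sym2 α)) (S : Set α) : SimpleGraph S where
  Adj x y := x ≠ y ∧ s((x : α), (y : α)) ∈ E
  symm := by
    constructor
    intro x y h
    exact ⟨h.1.symm, by rw [Sym2.eq_swap]; exact h.2⟩
  loopless := by constructor; intro x h; exact h.1 rfl

/-- `E` is the edge set of a tree on the node set `S`. -/
def IsTreeOn {α : Type*} (S : Set α) (E : Set (Sym2 α)) : Prop :=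
  (graphOn E S).IsTree ∧ ∀ e ∈ E, ¬ e.IsDiag ∧ ∀ x ∈ e, x ∈ S

/-- Two unordered pairs share exactly one element (the proximity condition). -/
def SharesExactlyOne {α : Type*} (a b : Sym2 α) : Prop :=
  ∃ x y z : α, x ≠ y ∧ x ≠ z ∧ y ≠ z ∧ a = s(x, z) ∧ b = s(y, z)

/-- A regular vine `V = (T₁,…,T_{d−1})` on `d` elements (Definition 2.1):
`T₁` is a tree on `{1,…,d}`; for each `k`, `T_{k+1}` is a tree whose node set is
the edge set of `T_k`; and the proximity condition holds. Here `edges k` is the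
edge set of tree `T_{k+1}` (0-indexed levels), and the trees `T_k` for `k > d−1`
are empty. -/
structure RegularVine (d : ℕ) where
  edges : ∀ k : ℕ, Set (Sym2 (VineNode d k))
  tree_zero : IsTreeOn (Set.univ : Set (VineNode d 0)) (edges 0)
  tree_succ : ∀ k : ℕ, k + 2 ≤ d - 1 →
    IsTreeOn (edges k : Set (VineNode d (k + 1))) (edges (k + 1))
  prox : ∀ k : ℕ, ∀ e ∈ edges (k + 1), ∀ a b : VineNode d (k + 1),
    e = s(a, b) → a ≠ b → SharesExactlyOne (a : Sym2 (VineNode d k)) b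
  edges_top : ∀ k : ℕ, d - 1 ≤ k → edges k = ∅

/-- The complete union `A_e ⊆ {1,…,d}` of a node/edge of a regular vine. -/
def completeUnion (d : ℕ) : ∀ k : ℕ, VineNode d k → Set (Fin d)
  | 0, v => {v}
  | k + 1, e => {i | ∃ a, a ∈ (e : Sym2 (VineNode d k)) ∧ i ∈ completeUnion d k a}

/-!
The pairs underlying an edge `e ∈ V.edges k` unfold, level by level, into sets of edges of the
trees below it, and each of these sets is connected: connectedness passes from one level to the
next because adjacent nodes share an element (proximity). A finite connected set of `n` edges of a
tree spans exactly `n + 1` nodes, so unfolding `{e}` down to `{1,…,d}` gains one element per level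
and `A_e` has `k + 2` elements. Likewise `A_a` and `A_b` have `k + 1` elements, and since
`A_e = A_a ∪ A_b`, inclusion–exclusion gives `|A_a ∩ A_b| = k` and singleton conditioned sets.
-/

open SimpleGraph

section PairSupport

variable {α : Type*}

def pairSupport (F : Set (Sym2 α)) : Set α := {x | ∃ e ∈ F, x ∈ e}

lemma mem_pairSupport {F : Set (Sym2 α)} {x : α} : x ∈ pairSupport F ↔ ∃ e ∈ F, x ∈ e := Iff.rfl

lemma mem_pairSupport_of_mem {F : Set (Sym2 α)} {e : Sym2 α} {x : α} (he : e ∈ F) (hx : x ∈ e) :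
    x ∈ pairSupport F :=
  ⟨e, he, hx⟩

lemma finite_pairSupport {F : Set (Sym2 α)} (hF : F.Finite) : (pairSupport F).Finite := by
  have : pairSupport F = ⋃ e ∈ F, {x | x ∈ e} := by ext; simp [mem_pairSupport]
  rw [this]
  refine hF.biUnion fun e _ => ?_
  induction e using Sym2.ind with
  | _ p q => exact ((Set.finite_singleton q).insert p).subset fun x hx => by simpa using hx

lemma nonempty_pairSupport {F : Set (Sym2 α)} (hF : F.Nonempty) : (pairSupport F).Nonempty := by
  obtain ⟨e, he⟩ := hF
  induction e using Sym2.ind with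
  | _ p q => exact ⟨p, mem_pairSupport_of_mem he (Sym2.mem_mk_left p q)⟩

lemma graphOn_eq_induce (F : Set (Sym2 α)) (T : Set α) :
    graphOn F T = (fromEdgeSet F).induce T := by
  ext x y
  simp [graphOn, fromEdgeSet_adj, and_comm, Subtype.val_inj]

lemma reachable_fromEdgeSet_of_mem {W : Set (Sym2 α)} {u : Sym2 α} (hu : u ∈ W) {p q : α}
    (hp : p ∈ u) (hq : q ∈ u) : (fromEdgeSet W).Reachable p q := by
  rcases eq_or_ne p q with rfl | hpq
  · rfl
  · refine Adj.reachable ((fromEdgeSet_adj _).mpr ⟨?_, hpq⟩)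
    rwa [← (Sym2.mem_and_mem_iff hpq).mp ⟨hp, hq⟩]

def IsConnectedEdgeSet (F : Set (Sym2 α)) : Prop :=
  ∀ x ∈ pairSupport F, ∀ y ∈ pairSupport F, (fromEdgeSet F).Reachable x y

lemma isConnectedEdgeSet_singleton (e : Sym2 α) : IsConnectedEdgeSet {e} := by
  rintro x ⟨_, rfl, hx⟩ y ⟨_, rfl, hy⟩
  exact reachable_fromEdgeSet_of_mem (Set.mem_singleton _) hx hy

lemma IsConnectedEdgeSet.connected_graphOn {F : Set (Sym2 α)} (hc : IsConnectedEdgeSet F)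
    (hne : F.Nonempty) : (graphOn F (pairSupport F)).Connected := by
  have hsupp : (fromEdgeSet F).support ⊆ pairSupport F := by
    rintro x ⟨y, hxy⟩
    exact mem_pairSupport_of_mem ((fromEdgeSet_adj _).mp hxy).1 (Sym2.mem_mk_left x y)
  rw [graphOn_eq_induce, connected_iff]
  refine ⟨fun ⟨x, hx⟩ ⟨y, hy⟩ => ?_, (nonempty_pairSupport hne).to_subtype⟩
  obtain ⟨w⟩ := hc x hx y hy
  refine ⟨w.induce _ fun z hz => ?_⟩
  by_cases hw : w.Nil
  · rw [Walk.nil_iff_support_eq.mp hw, List.mem_singleton] at hz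
    exact hz ▸ hx
  · exact hsupp (mem_support_of_mem_walk_support w hw hz)

lemma image_edgeSet_graphOn {F : Set (Sym2 α)} {T : Set α}
    (hF : ∀ e ∈ F, ¬ e.IsDiag ∧ ∀ x ∈ e, x ∈ T) :
    Sym2.map (↑) '' (graphOn F T).edgeSet = F := by
  ext e
  induction e using Sym2.ind with
  | _ p q =>
    constructor
    · rintro ⟨e', he', hmap⟩
      induction e' using Sym2.ind with
      | _ u v => rw [← hmap]; exact he'.2
    · intro he
      have hpq : p ≠ q := fun h => (hF _ he).1 (Sym2.mk_isDiag_iff.mpr h)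
      refine ⟨s(⟨p, (hF _ he).2 p (Sym2.mem_mk_left p q)⟩,
        ⟨q, (hF _ he).2 q (Sym2.mem_mk_right p q)⟩), ⟨fun h => hpq (congrArg Subtype.val h), he⟩,
        rfl⟩

lemma IsTreeOn.ncard_pairSupport {S : Set α} {E F : Set (Sym2 α)} (hT : IsTreeOn S E)
    (hFE : F ⊆ E) (hfin : F.Finite) (hne : F.Nonempty) (hc : IsConnectedEdgeSet F) :
    (pairSupport F).ncard = F.ncard + 1 := by
  have hTS : pairSupport F ⊆ S := fun x ⟨e, he, hx⟩ => (hT.2 e (hFE he)).2 x hx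
  let φ : graphOn F (pairSupport F) →g graphOn E S :=
    ⟨Set.inclusion hTS, fun h => ⟨fun h' => h.1 (Set.inclusion_injective hTS h'), hFE h.2⟩⟩
  have htree : (graphOn F (pairSupport F)).IsTree :=
    ⟨hc.connected_graphOn hne, hT.1.isAcyclic.comap φ (Set.inclusion_injective hTS)⟩
  have : Finite (pairSupport F) := (finite_pairSupport hfin).to_subtype
  calc (pairSupport F).ncard = Nat.card (graphOn F (pairSupport F)).edgeSet + 1 :=
        ((isTree_iff_connected_and_card.mp htree).2).symm
    _ = F.ncard + 1 := by
      rw [Nat.card_coe_set_eq, ← Set.ncard_image_of_injective _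
        (Sym2.map.injective Subtype.val_injective),
        image_edgeSet_graphOn fun e he => ⟨(hT.2 e (hFE he)).1, fun _ => mem_pairSupport_of_mem he⟩]

lemma IsConnectedEdgeSet.pairSupport {F : Set (Sym2 (Sym2 α))} (hc : IsConnectedEdgeSet F)
    (hprox : ∀ u b, s(u, b) ∈ F → u ≠ b → ∃ z, z ∈ u ∧ z ∈ b) :
    IsConnectedEdgeSet (_root_.pairSupport F) := by
  have hwalk : ∀ {u v : Sym2 α} (_ : (fromEdgeSet F).Walk u v), u ∈ _root_.pairSupport F →
      ∀ p ∈ u, ∀ q ∈ v, (fromEdgeSet (_root_.pairSupport F)).Reachable p q := by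
    intro u v w
    induction w with
    | nil => exact fun hu p hp q hq => reachable_fromEdgeSet_of_mem hu hp hq
    | @cons u b v hub w ih =>
      intro hu p hp q hq
      obtain ⟨hF, hne⟩ := (fromEdgeSet_adj _).mp hub
      obtain ⟨z, hzu, hzb⟩ := hprox u b hF hne
      exact (reachable_fromEdgeSet_of_mem hu hp hzu).trans
        (ih (mem_pairSupport_of_mem hF (Sym2.mem_mk_right u b)) z hzb q hq)
  rintro p ⟨u, hu, hp⟩ q ⟨v, hv, hq⟩
  obtain ⟨w⟩ := hc u hu v hv
  exact hwalk w hu p hp q hq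

end PairSupport

lemma completeUnion_mk {d k : ℕ} (a b : VineNode d k) :
    completeUnion d (k + 1) s(a, b) = completeUnion d k a ∪ completeUnion d k b := by
  ext i
  simp [completeUnion]

lemma biUnion_completeUnion_succ {d k : ℕ} (F : Set (VineNode d (k + 1))) :
    ⋃ v ∈ F, completeUnion d (k + 1) v = ⋃ w ∈ pairSupport F, completeUnion d k w := by
  ext i
  simp only [completeUnion, Set.mem_iUnion, Set.mem_ofPred_eq, mem_pairSupport, exists_prop]
  exact ⟨fun ⟨v, hv, w, hw, hi⟩ => ⟨w, ⟨v, hv, hw⟩, hi⟩,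
    fun ⟨w, ⟨v, hv, hw⟩, hi⟩ => ⟨v, hv, w, hw, hi⟩⟩

namespace RegularVine

variable {d : ℕ} (V : RegularVine d)

lemma le_of_mem_edges {k : ℕ} {e : Sym2 (VineNode d k)} (he : e ∈ V.edges k) :
    k + 1 ≤ d - 1 := by
  by_contra h
  rw [V.edges_top k (by omega)] at he
  exact he

lemma exists_isTreeOn {k : ℕ} {e : Sym2 (VineNode d k)} (he : e ∈ V.edges k) :
    ∃ S, IsTreeOn S (V.edges k) := by
  cases k with
  | zero => exact ⟨_, V.tree_zero⟩
  | succ k => exact ⟨_, V.tree_succ k (V.le_of_mem_edges he)⟩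

lemma mem_edges_of_mem {k : ℕ} {e : Sym2 (VineNode d (k + 1))} (he : e ∈ V.edges (k + 1))
    {a : VineNode d (k + 1)} (ha : a ∈ e) : a ∈ V.edges k :=
  ((V.tree_succ k (V.le_of_mem_edges he)).2 e he).2 a ha

lemma pairSupport_subset_edges {k : ℕ} {F : Set (VineNode d (k + 2))}
    (hF : F ⊆ V.edges (k + 1)) : pairSupport F ⊆ V.edges k := fun _ hx =>
  let ⟨_, he, ha⟩ := mem_pairSupport.mp hx
  V.mem_edges_of_mem (hF he) ha

lemma isConnectedEdgeSet_pairSupport {k : ℕ} {F : Set (VineNode d (k + 2))}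
    (hF : F ⊆ V.edges (k + 1)) (hc : IsConnectedEdgeSet F) :
    IsConnectedEdgeSet (pairSupport F) :=
  hc.pairSupport fun u b hub hne => by
    obtain ⟨x, y, z, -, -, -, rfl, rfl⟩ := V.prox k _ (hF hub) u b rfl hne
    exact ⟨z, Sym2.mem_mk_right x z, Sym2.mem_mk_right y z⟩

lemma ncard_biUnion_completeUnion : ∀ {k : ℕ} {F : Set (VineNode d (k + 1))},
    F ⊆ V.edges k → F.Finite → F.Nonempty → IsConnectedEdgeSet F →
      (⋃ v ∈ F, completeUnion d (k + 1) v).ncard = F.ncard + (k + 1)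
  | 0, F, hF, hfin, hne, hc => by
    obtain ⟨S, hS⟩ := V.exists_isTreeOn (hF hne.some_mem)
    rw [biUnion_completeUnion_succ]
    simpa [completeUnion] using hS.ncard_pairSupport hF hfin hne hc
  | k + 1, F, hF, hfin, hne, hc => by
    obtain ⟨S, hS⟩ := V.exists_isTreeOn (hF hne.some_mem)
    rw [biUnion_completeUnion_succ, ncard_biUnion_completeUnion
      (V.pairSupport_subset_edges hF) (finite_pairSupport hfin)
      (nonempty_pairSupport hne) (V.isConnectedEdgeSet_pairSupport hF hc),
      hS.ncard_pairSupport hF hfin hne hc]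
    omega

lemma ncard_completeUnion_of_mem_edges {k : ℕ} {e : Sym2 (VineNode d k)} (he : e ∈ V.edges k) :
    (completeUnion d (k + 1) e).ncard = k + 2 := by
  have := V.ncard_biUnion_completeUnion (Set.singleton_subset_iff.mpr he)
    (Set.finite_singleton e) (Set.singleton_nonempty e) (isConnectedEdgeSet_singleton e)
  simp only [Set.mem_singleton_iff, Set.iUnion_iUnion_eq_left, Set.ncard_singleton] at this
  omega

lemma ncard_completeUnion_of_mem {k : ℕ} {e : Sym2 (VineNode d k)} (he : e ∈ V.edges k)
    {a : VineNode d k} (ha : a ∈ e) : (completeUnion d k a).ncard = k + 1 := by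
  cases k with
  | zero => exact Set.ncard_singleton a
  | succ k => exact V.ncard_completeUnion_of_mem_edges (V.mem_edges_of_mem he ha)

end RegularVine

/-- In a regular vine on `d` elements, for every edge `e = {a,b}` of a tree of
the vine (here `e ∈ edges k`, i.e. an edge of tree `T_{k+1}`), the conditioned
sets `i(e) = A_a \ D(e)` and `j(e) = A_b \ D(e)` are singletons, the conditioning
set `D(e) = A_a ∩ A_b` has cardinality `(k+1) − 1 = k`, and the complete union
`A_e` has cardinality `(k+1) + 1 = k + 2`. -/
theorem conditioned_sets_are_singletons (d : ℕ) (V : RegularVine d) (k : ℕ)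
    (e : Sym2 (VineNode d k)) (he : e ∈ V.edges k) (a b : VineNode d k)
    (hab : e = s(a, b)) :
    (completeUnion d k a \ (completeUnion d k a ∩ completeUnion d k b)).ncard = 1 ∧
    (completeUnion d k b \ (completeUnion d k a ∩ completeUnion d k b)).ncard = 1 ∧
    (completeUnion d k a ∩ completeUnion d k b).ncard = k ∧
    (completeUnion d (k + 1) e).ncard = k + 2 := by
  subst hab
  have hA := V.ncard_completeUnion_of_mem he (Sym2.mem_mk_left a b)
  have hB := V.ncard_completeUnion_of_mem he (Sym2.mem_mk_right a b)
  have hAB := V.ncard_completeUnion_of_mem_edges he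
  rw [completeUnion_mk] at hAB ⊢
  rw [Set.sdiff_self_inter, Set.inter_comm, Set.sdiff_self_inter, Set.inter_comm]
  have hinter := Set.ncard_inter_add_ncard_union (completeUnion d k a) (completeUnion d k b)
  have hdiffA := Set.ncard_sdiff_add_ncard (completeUnion d k a) (completeUnion d k b)
  have hdiffB := Set.ncard_sdiff_add_ncard (completeUnion d k b) (completeUnion d k a)
  rw [Set.union_comm] at hdiffB
  omega
end

section
/- Let c₂ and c₃ be bivariate copula densities and let C_{2|1}(u₂|u₁) = ∫₀^{u₂} c₂(u₁,t) dt. Then the three-dimensional pair copula construction density c(u₁,u₂,u₃) = c₂(u₁,u₂) · c₃(u₁,u₃) · c₂₃(C_{2|1}(u₂|u₁), C_{3|1}(u₃|u₁)), where c₂₃ is any bivariate copula density, is a valid probability density on [0,1]³ with uniform margins. -/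
open MeasureTheory

def IsCopulaDensity (c : ℝ → ℝ → ℝ) : Prop :=
  Measurable (Function.uncurry c) ∧ (∀ u v : ℝ, 0 ≤ c u v) ∧
  (∀ u ∈ Set.Icc (0:ℝ) 1, (∫ v in (0:ℝ)..1, c u v) = 1) ∧
  (∀ v ∈ Set.Icc (0:ℝ) 1, (∫ u in (0:ℝ)..1, c u v) = 1)

open Set
open scoped ENNReal

/-! The probability integral transform does all the work: for `f ≥ 0` integrable on `(a, b]`
with primitive `F x = ∫ₐˣ f`, the image of `f(x) dx` under `F` is Lebesgue measure on
`(0, F b]`, because `F` is continuous and monotone, so `{F ≤ r}` is an initial segment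
`(a, x₀]` with `F x₀ = min r (F b)`. Hence `∫ₐᵇ f(x) g(F x) dx = ∫₀^{F b} g`.

With `C_{j|1}(·|u₁)` in the role of `F`, integrating out `u₃` over `[0, s]` leaves
`c₂(u₁,u₂) ∫₀^{C_{3|1}(s|u₁)} c₂₃(C_{2|1}(u₂|u₁), v) dv`. For `s = 1` the inner integral is `1`
since `c₂₃` is a copula density; otherwise a second transform in `u₂` turns the remaining
integral into `∫₀¹ ∫₀^{C_{3|1}(s|u₁)} c₂₃ = C_{3|1}(s|u₁)`. The last integration over `u₁` is
Tonelli together with the other margin condition, `∫₀¹ C_{j|1}(s|u₁) du₁ = s`. -/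

theorem MonotoneOn.exists_Icc_inter_preimage_Iic_eq {F : ℝ → ℝ} {a b r : ℝ} (hab : a ≤ b)
    (hmono : MonotoneOn F (Icc a b)) (hcont : ContinuousOn F (Icc a b)) (hr : F a ≤ r) :
    ∃ x₀ ∈ Icc a b, F x₀ = min r (F b) ∧ Icc a b ∩ F ⁻¹' Iic r = Icc a x₀ := by
  set s := Icc a b ∩ F ⁻¹' Iic r
  have hs : IsCompact s := isCompact_Icc.of_isClosed_subset
    (hcont.preimage_isClosed_of_isClosed isClosed_Icc isClosed_Iic) inter_subset_left
  obtain ⟨x₀, ⟨hx₀, hFx₀⟩, hmax⟩ := hs.exists_isGreatest ⟨a, left_mem_Icc.2 hab, hr⟩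
  refine ⟨x₀, hx₀, ?_, ?_⟩
  · rcases le_or_gt (F b) r with hbr | hrb
    · have : x₀ = b := le_antisymm hx₀.2 (hmax ⟨right_mem_Icc.2 hab, hbr⟩)
      rw [this, min_eq_right hbr]
    · obtain ⟨z, hz, hFz⟩ := intermediate_value_Icc hx₀.2 (hcont.mono (Icc_subset_Icc_left hx₀.1))
        ⟨hFx₀, hrb.le⟩
      have : z = x₀ := le_antisymm (hmax ⟨⟨hx₀.1.trans hz.1, hz.2⟩, hFz.le⟩) hz.1
      rw [← this, hFz, min_eq_left hrb.le]
  · ext x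
    refine ⟨fun hx => ⟨hx.1.1, hmax hx⟩, fun hx => ⟨⟨hx.1, hx.2.trans hx₀.2⟩, ?_⟩⟩
    exact (hmono ⟨hx.1, hx.2.trans hx₀.2⟩ hx₀ hx.2).trans hFx₀

section ChangeOfVariables

variable {f : ℝ → ℝ} {a b : ℝ}

theorem monotoneOn_primitive (hfi : IntegrableOn f (Ioc a b)) (hf : ∀ x ∈ Ioc a b, 0 ≤ f x) :
    MonotoneOn (fun x => ∫ t in a..x, f t) (Icc a b) := by
  intro x hx y hy hxy
  refine intervalIntegral.integral_mono_interval le_rfl hx.1 hxy ?_ ?_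
  · exact ae_restrict_of_forall_mem measurableSet_Ioc fun t ht => hf t ⟨ht.1, ht.2.trans hy.2⟩
  · exact (intervalIntegrable_iff_integrableOn_Ioc_of_le hy.1).2
      (hfi.mono_set (Ioc_subset_Ioc_right hy.2))

theorem continuousOn_primitive (hab : a ≤ b) (hfi : IntegrableOn f (Ioc a b)) :
    ContinuousOn (fun x => ∫ t in a..x, f t) (Icc a b) := by
  have := intervalIntegral.continuousOn_primitive_interval (a := a) (b := b) (f := f)
    (μ := volume) (by rwa [uIcc_of_le hab, integrableOn_Icc_iff_integrableOn_Ioc])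
  rwa [uIcc_of_le hab] at this

theorem aemeasurable_primitive (hab : a ≤ b) (hfi : IntegrableOn f (Ioc a b)) :
    AEMeasurable (fun x => ∫ t in a..x, f t) (volume.restrict (Ioc a b)) :=
  ((continuousOn_primitive hab hfi).mono Ioc_subset_Icc_self).aemeasurable measurableSet_Ioc

theorem map_withDensity_primitive (hab : a ≤ b) (hfi : IntegrableOn f (Ioc a b))
    (hf : ∀ x ∈ Ioc a b, 0 ≤ f x) :
    ((volume.restrict (Ioc a b)).withDensity fun x => ENNReal.ofReal (f x)).map
        (fun x => ∫ t in a..x, f t) = volume.restrict (Ioc 0 (∫ t in a..b, f t)) := by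
  set F := fun x => ∫ t in a..x, f t with hF
  have hmono := monotoneOn_primitive hfi hf
  have hcont := continuousOn_primitive hab hfi
  have hFae := aemeasurable_primitive hab hfi
  refine (Measure.ext_of_Iic _ _ fun r => ?_).symm
  rw [Measure.map_apply_of_aemeasurable (hFae.mono_ac (withDensity_absolutelyContinuous _ _))
      measurableSet_Iic, withDensity_apply' _, Measure.restrict_restrict' measurableSet_Ioc,
    Measure.restrict_apply measurableSet_Iic, inter_comm, Ioc_inter_Iic]
  rcases lt_or_ge r 0 with hr | hr
  · have hempty : F ⁻¹' Iic r ∩ Ioc a b = ∅ := by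
      refine eq_empty_of_forall_notMem fun x hx => hr.not_ge ?_
      have : F a ≤ F x := hmono (left_mem_Icc.2 hab) (Ioc_subset_Icc_self hx.2) hx.2.1.le
      simp only [hF, intervalIntegral.integral_same] at this
      exact this.trans hx.1
    rw [hempty, Measure.restrict_empty, lintegral_zero_measure,
      Ioc_eq_empty (not_lt.2 (min_le_right _ r |>.trans hr.le)), measure_empty]
  · obtain ⟨x₀, hx₀, hFx₀, hset⟩ := MonotoneOn.exists_Icc_inter_preimage_Iic_eq hab hmono hcont
      (by simpa [hF] using hr)
    have hIoc : F ⁻¹' Iic r ∩ Ioc a b = Ioc a x₀ := by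
      ext x
      constructor
      · rintro ⟨hxr, hx⟩
        exact ⟨hx.1, (hset ▸ ⟨Ioc_subset_Icc_self hx, hxr⟩ : x ∈ Icc a x₀).2⟩
      · intro hx
        have hx' : x ∈ Icc a b ∩ F ⁻¹' Iic r := hset ▸ Ioc_subset_Icc_self hx
        exact ⟨hx'.2, hx.1, hx'.1.2⟩
    rw [hIoc, ← ofReal_integral_eq_lintegral_ofReal (hfi.mono_set (Ioc_subset_Ioc_right hx₀.2))
      (ae_restrict_of_forall_mem measurableSet_Ioc fun x hx => hf x ⟨hx.1, hx.2.trans hx₀.2⟩),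
      ← intervalIntegral.integral_of_le hx₀.1, Real.volume_Ioc, sub_zero, min_comm]
    exact congrArg ENNReal.ofReal hFx₀.symm

theorem lintegral_mul_comp_primitive (hab : a ≤ b) (hfi : IntegrableOn f (Ioc a b))
    (hf : ∀ x ∈ Ioc a b, 0 ≤ f x) {g : ℝ → ℝ≥0∞} (hg : Measurable g) :
    ∫⁻ x in Ioc a b, ENNReal.ofReal (f x) * g (∫ t in a..x, f t)
      = ∫⁻ v in Ioc 0 (∫ t in a..b, f t), g v := by
  have hFae := aemeasurable_primitive hab hfi
  rw [← map_withDensity_primitive hab hfi hf,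
    lintegral_map' hg.aemeasurable (hFae.mono_ac (withDensity_absolutelyContinuous _ _))]
  exact (lintegral_withDensity_eq_lintegral_mul₀ hfi.aemeasurable.ennreal_ofReal
    (hg.comp_aemeasurable hFae)).symm

theorem integral_mul_comp_primitive (hab : a ≤ b) (hfi : IntegrableOn f (Ioc a b))
    (hf : ∀ x ∈ Ioc a b, 0 ≤ f x) {g : ℝ → ℝ} (hg : Measurable g) (hg₀ : 0 ≤ g) :
    ∫ x in a..b, f x * g (∫ t in a..x, f t) = ∫ v in 0..(∫ t in a..b, f t), g v := by
  have hFb : 0 ≤ ∫ t in a..b, f t := by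
    rw [intervalIntegral.integral_of_le hab]
    exact setIntegral_nonneg measurableSet_Ioc hf
  have hFae := aemeasurable_primitive hab hfi
  rw [intervalIntegral.integral_of_le hab, intervalIntegral.integral_of_le hFb,
    integral_eq_lintegral_of_nonneg_ae (ae_restrict_of_forall_mem measurableSet_Ioc
      fun x hx => mul_nonneg (hf x hx) (hg₀ _))
      (hfi.aestronglyMeasurable.mul (hg.comp_aemeasurable hFae).aestronglyMeasurable),
    integral_eq_lintegral_of_nonneg_ae (Filter.Eventually.of_forall hg₀)
      hg.aestronglyMeasurable,
    ← lintegral_mul_comp_primitive hab hfi hf hg.ennreal_ofReal]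
  congr 1
  exact setLIntegral_congr_fun measurableSet_Ioc fun x hx => ENNReal.ofReal_mul (hf x hx)

end ChangeOfVariables

namespace IsCopulaDensity

variable {c : ℝ → ℝ → ℝ} {u s : ℝ}

theorem swap (hc : IsCopulaDensity c) : IsCopulaDensity fun u v => c v u :=
  ⟨hc.1.comp measurable_swap, fun u v => hc.2.1 v u, hc.2.2.2, hc.2.2.1⟩

theorem measurable_right (hc : IsCopulaDensity c) (u : ℝ) : Measurable (c u) :=
  hc.1.comp measurable_prodMk_left

theorem integrableOn (hc : IsCopulaDensity c) (hu : u ∈ Icc 0 1) (hs : s ∈ Icc 0 1) :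
    IntegrableOn (c u) (Ioc 0 s) := by
  refine IntegrableOn.mono_set ?_ (Ioc_subset_Ioc_right hs.2)
  -- A non-integrable function would have the junk integral `0`, not `1`.
  by_contra h
  have h1 := hc.2.2.1 u hu
  rw [intervalIntegral.integral_of_le zero_le_one, integral_undef h] at h1
  exact zero_ne_one h1

theorem ofReal_integral (hc : IsCopulaDensity c) (hu : u ∈ Icc 0 1) (hs : s ∈ Icc 0 1) :
    ENNReal.ofReal (∫ v in 0..s, c u v) = ∫⁻ v in Ioc 0 s, ENNReal.ofReal (c u v) := by
  rw [intervalIntegral.integral_of_le hs.1, ofReal_integral_eq_lintegral_ofReal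
    (hc.integrableOn hu hs) (Filter.Eventually.of_forall (hc.2.1 u))]

theorem integral_mem_Icc (hc : IsCopulaDensity c) (hu : u ∈ Icc 0 1) (hs : s ∈ Icc 0 1) :
    ∫ v in 0..s, c u v ∈ Icc 0 1 := by
  refine ⟨intervalIntegral.integral_nonneg hs.1 fun v _ => hc.2.1 u v, ?_⟩
  rw [← hc.2.2.1 u hu]
  exact intervalIntegral.integral_mono_interval le_rfl hs.1 hs.2
    (Filter.Eventually.of_forall (hc.2.1 u))
    ((intervalIntegrable_iff_integrableOn_Ioc_of_le zero_le_one).2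
      (hc.integrableOn hu (right_mem_Icc.2 zero_le_one)))

theorem lintegral_lintegral_eq (hc : IsCopulaDensity c) (hs : s ∈ Icc 0 1) :
    ∫⁻ u in Ioc 0 1, ∫⁻ v in Ioc 0 s, ENNReal.ofReal (c u v) = ENNReal.ofReal s := by
  rw [lintegral_lintegral_swap hc.1.ennreal_ofReal.aemeasurable,
    setLIntegral_congr_fun measurableSet_Ioc fun v hv => by
      rw [← hc.swap.ofReal_integral ⟨hv.1.le, hv.2.trans hs.2⟩ (right_mem_Icc.2 zero_le_one),
        hc.2.2.2 v ⟨hv.1.le, hv.2.trans hs.2⟩, ENNReal.ofReal_one],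
    setLIntegral_one, Real.volume_Ioc, sub_zero]

theorem measurable_integral (hc : IsCopulaDensity c) (hs : 0 ≤ s) :
    Measurable fun u => ∫ v in 0..s, c u v := by
  simp only [intervalIntegral.integral_of_le hs]
  exact hc.1.stronglyMeasurable.integral_prod_right.measurable

theorem integral_integral_eq (hc : IsCopulaDensity c) (hs : s ∈ Icc 0 1) :
    ∫ u in 0..1, ∫ v in 0..s, c u v = s := by
  rw [intervalIntegral.integral_of_le zero_le_one,
    integral_eq_lintegral_of_nonneg_ae (Filter.Eventually.of_forall fun u =>
      intervalIntegral.integral_nonneg hs.1 fun v _ => hc.2.1 u v)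
      (hc.measurable_integral hs.1).aestronglyMeasurable,
    setLIntegral_congr_fun measurableSet_Ioc fun u hu =>
      hc.ofReal_integral (Ioc_subset_Icc_self hu) hs,
    hc.lintegral_lintegral_eq hs, ENNReal.toReal_ofReal hs.1]

end IsCopulaDensity

noncomputable def pccDensity (c₂ c₃ c₂₃ : ℝ → ℝ → ℝ) (u₁ u₂ u₃ : ℝ) : ℝ :=
  c₂ u₁ u₂ * c₃ u₁ u₃ * c₂₃ (∫ t in 0..u₂, c₂ u₁ t) (∫ t in 0..u₃, c₃ u₁ t)

section PairCopulaConstruction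

variable {c₂ c₃ c₂₃ : ℝ → ℝ → ℝ} {u₁ s : ℝ}

theorem pccDensity_nonneg (h₂ : IsCopulaDensity c₂) (h₃ : IsCopulaDensity c₃)
    (h₂₃ : IsCopulaDensity c₂₃) (u₁ u₂ u₃ : ℝ) : 0 ≤ pccDensity c₂ c₃ c₂₃ u₁ u₂ u₃ :=
  mul_nonneg (mul_nonneg (h₂.2.1 _ _) (h₃.2.1 _ _)) (h₂₃.2.1 _ _)

theorem integral_pccDensity (h₃ : IsCopulaDensity c₃) (h₂₃ : IsCopulaDensity c₂₃)
    (hu₁ : u₁ ∈ Icc 0 1) (hs : s ∈ Icc 0 1) (u₂ : ℝ) :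
    ∫ u₃ in 0..s, pccDensity c₂ c₃ c₂₃ u₁ u₂ u₃
      = c₂ u₁ u₂ * ∫ v in 0..(∫ t in 0..s, c₃ u₁ t), c₂₃ (∫ t in 0..u₂, c₂ u₁ t) v := by
  simp only [pccDensity, mul_assoc]
  rw [intervalIntegral.integral_const_mul, integral_mul_comp_primitive hs.1
    (h₃.integrableOn hu₁ hs) (fun x _ => h₃.2.1 u₁ x) (h₂₃.measurable_right _)
    (h₂₃.2.1 _)]

theorem integral_integral_pccDensity_c₂ (h₂ : IsCopulaDensity c₂) (h₃ : IsCopulaDensity c₃)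
    (h₂₃ : IsCopulaDensity c₂₃) (hu₁ : u₁ ∈ Icc 0 1) (hs : s ∈ Icc 0 1) :
    ∫ u₂ in 0..s, ∫ u₃ in 0..1, pccDensity c₂ c₃ c₂₃ u₁ u₂ u₃ = ∫ t in 0..s, c₂ u₁ t := by
  refine intervalIntegral.integral_congr fun u₂ hu₂ => ?_
  have hu₂' : u₂ ∈ Icc (0:ℝ) 1 := uIcc_subset_Icc (left_mem_Icc.2 zero_le_one) hs hu₂
  rw [integral_pccDensity h₃ h₂₃ hu₁ (right_mem_Icc.2 zero_le_one), h₃.2.2.1 u₁ hu₁,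
    h₂₃.2.2.1 _ (h₂.integral_mem_Icc hu₁ hu₂'), mul_one]

theorem integral_integral_pccDensity_c₃ (h₂ : IsCopulaDensity c₂) (h₃ : IsCopulaDensity c₃)
    (h₂₃ : IsCopulaDensity c₂₃) (hu₁ : u₁ ∈ Icc 0 1) (hs : s ∈ Icc 0 1) :
    ∫ u₂ in 0..1, ∫ u₃ in 0..s, pccDensity c₂ c₃ c₂₃ u₁ u₂ u₃ = ∫ t in 0..s, c₃ u₁ t := by
  have hX := h₃.integral_mem_Icc hu₁ hs
  simp only [integral_pccDensity h₃ h₂₃ hu₁ hs]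
  rw [integral_mul_comp_primitive zero_le_one (h₂.integrableOn hu₁ (right_mem_Icc.2 zero_le_one))
      (fun x _ => h₂.2.1 u₁ x) (h₂₃.measurable_integral hX.1)
      fun w => intervalIntegral.integral_nonneg hX.1 fun v _ => h₂₃.2.1 w v,
    h₂.2.2.1 u₁ hu₁, h₂₃.integral_integral_eq hX]

end PairCopulaConstruction

/-- The three-dimensional pair copula construction
`c(u₁,u₂,u₃) = c₂(u₁,u₂) · c₃(u₁,u₃) · c₂₃(C_{2|1}(u₂|u₁), C_{3|1}(u₃|u₁))`,
with conditional CDFs `C_{2|1}(u₂|u₁) = ∫₀^{u₂} c₂(u₁,t) dt` and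
`C_{3|1}(u₃|u₁) = ∫₀^{u₃} c₃(u₁,t) dt`, is a valid probability density on
`[0,1]³` (nonnegative, total integral `1`) with uniform univariate margins. -/
theorem three_dim_pcc_is_density (c₂ c₃ c₂₃ : ℝ → ℝ → ℝ)
    (h₂ : IsCopulaDensity c₂) (h₃ : IsCopulaDensity c₃)
    (h₂₃ : IsCopulaDensity c₂₃)
    (f : ℝ → ℝ → ℝ → ℝ)
    (hf : ∀ u₁ u₂ u₃ : ℝ, f u₁ u₂ u₃ =
      c₂ u₁ u₂ * c₃ u₁ u₃ *
        c₂₃ (∫ t in (0:ℝ)..u₂, c₂ u₁ t) (∫ t in (0:ℝ)..u₃, c₃ u₁ t)) :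
    (∀ u₁ u₂ u₃ : ℝ, 0 ≤ f u₁ u₂ u₃) ∧
    (∫ u₁ in (0:ℝ)..1, ∫ u₂ in (0:ℝ)..1, ∫ u₃ in (0:ℝ)..1, f u₁ u₂ u₃) = 1 ∧
    (∀ t ∈ Set.Icc (0:ℝ) 1,
      (∫ u₁ in (0:ℝ)..t, ∫ u₂ in (0:ℝ)..1, ∫ u₃ in (0:ℝ)..1, f u₁ u₂ u₃) = t) ∧
    (∀ t ∈ Set.Icc (0:ℝ) 1,
      (∫ u₁ in (0:ℝ)..1, ∫ u₂ in (0:ℝ)..t, ∫ u₃ in (0:ℝ)..1, f u₁ u₂ u₃) = t) ∧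
    (∀ t ∈ Set.Icc (0:ℝ) 1,
      (∫ u₁ in (0:ℝ)..1, ∫ u₂ in (0:ℝ)..1, ∫ u₃ in (0:ℝ)..t, f u₁ u₂ u₃) = t) := by
  obtain rfl : f = pccDensity c₂ c₃ c₂₃ := funext fun u₁ => funext fun u₂ => funext (hf u₁ u₂)
  have hone : (1:ℝ) ∈ Icc (0:ℝ) 1 := right_mem_Icc.2 zero_le_one
  have hsub {t : ℝ} (ht : t ∈ Icc (0:ℝ) 1) : uIcc 0 t ⊆ Icc 0 1 :=
    uIcc_subset_Icc (left_mem_Icc.2 zero_le_one) ht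
  have hmargin₁ (t : ℝ) (ht : t ∈ Icc (0:ℝ) 1) :
      ∫ u₁ in 0..t, ∫ u₂ in 0..1, ∫ u₃ in 0..1, pccDensity c₂ c₃ c₂₃ u₁ u₂ u₃ = t := by
    rw [intervalIntegral.integral_congr (g := fun _ => 1) fun u₁ hu₁ => by
      rw [integral_integral_pccDensity_c₂ h₂ h₃ h₂₃ (hsub ht hu₁) hone, h₂.2.2.1 u₁ (hsub ht hu₁)]]
    simp
  refine ⟨pccDensity_nonneg h₂ h₃ h₂₃, hmargin₁ 1 hone, hmargin₁, fun t ht => ?_, fun t ht => ?_⟩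
  · rw [intervalIntegral.integral_congr fun u₁ hu₁ =>
      integral_integral_pccDensity_c₂ h₂ h₃ h₂₃ (hsub hone hu₁) ht]
    exact h₂.integral_integral_eq ht
  · rw [intervalIntegral.integral_congr fun u₁ hu₁ =>
      integral_integral_pccDensity_c₃ h₂ h₃ h₂₃ (hsub hone hu₁) ht]
    exact h₃.integral_integral_eq ht
end
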